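/- arXiv:2310.20482 — 2 statements merged into one kernel-verified Lean document; each statement's English description precedes it below -/
import Mathlib

section
/- Let h : [1,∞) → [1,∞) be a measurable function with h(s) ≥ 1 for all s, and suppose ∫₁^∞ ds/h(s) = +∞ is false, i.e. ∫₁^∞ ds/h(s) < +∞. Then for every natural number n ≥ 1, ∫₁^∞ h(s)^n/s^{n+1} ds = +∞. -/
/-! Pointwise, `1/s` is bounded by the weighted mean `(n · (1/h) + h^n/s^(n+1)) / (n+1)`, an
instance of Young's inequality for the exponents `(n+1)/n` and `n+1`; with natural powers it reduces
to Bernoulli's inequality for `t = h/s`. Both terms of the mean being integrable would make `1/s`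
integrable on `[a, ∞)`, which it is not. -/

open MeasureTheory Set

lemma add_one_le_div_add_pow (n : ℕ) {t : ℝ} (ht : 0 < t) : (n + 1 : ℝ) ≤ n / t + t ^ n := by
  have bernoulli : 1 + (n + 1 : ℕ) * (t - 1) ≤ (1 + (t - 1)) ^ (n + 1) :=
    one_add_mul_le_pow (by linarith) (n + 1)
  rw [add_sub_cancel, pow_succ] at bernoulli
  rw [div_add' _ _ _ ht.ne', le_div_iff₀ ht]
  push_cast at bernoulli
  linarith

lemma inv_le_div_add_pow_div_pow (n : ℕ) {s y : ℝ} (hs : 0 < s) (hy : 0 < y) :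
    s⁻¹ ≤ (n * (1 / y) + y ^ n / s ^ (n + 1)) / (n + 1) := by
  have key := add_one_le_div_add_pow n (div_pos hy hs)
  have expand : n / (y / s) + (y / s) ^ n = s * (n * (1 / y) + y ^ n / s ^ (n + 1)) := by
    rw [div_pow]
    field_simp
    ring
  rw [expand] at key
  rw [inv_eq_one_div, div_le_div_iff₀ hs (by positivity)]
  linarith

theorem not_integrableOn_pow_div_pow_of_integrableOn_one_div {h : ℝ → ℝ} {a : ℝ} (ha : 0 < a)
    (hpos : ∀ s ∈ Ici a, 0 < h s) (hint : IntegrableOn (fun s => 1 / h s) (Ici a)) (n : ℕ) :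
    ¬ IntegrableOn (fun s => h s ^ n / s ^ (n + 1)) (Ici a) := by
  intro hf
  have hmean : IntegrableOn (fun s => (n * (1 / h s) + h s ^ n / s ^ (n + 1)) / (n + 1)) (Ici a) :=
    ((hint.const_mul _).add hf).div_const _
  refine not_integrableOn_Ici_inv (hmean.mono' measurable_inv.aestronglyMeasurable ?_)
  filter_upwards [ae_restrict_mem measurableSet_Ici] with s hs
  have hs0 : 0 < s := ha.trans_le hs
  rw [Real.norm_of_nonneg (inv_nonneg.2 hs0.le)]
  exact inv_le_div_add_pow_div_pow n hs0 (hpos s hs)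

theorem stmt2_general (h : ℝ → ℝ) (h1 : ∀ s ∈ Set.Ici (1:ℝ), 1 ≤ h s)
    (hint : IntegrableOn (fun s => 1 / h s) (Set.Ici (1:ℝ))) :
    ∀ n : ℕ, 1 ≤ n →
      ¬ IntegrableOn (fun s => h s ^ n / s ^ (n + 1)) (Set.Ici (1:ℝ)) := fun n _ =>
  not_integrableOn_pow_div_pow_of_integrableOn_one_div one_pos
    (fun s hs => one_pos.trans_le (h1 s hs)) hint n

theorem stmt2 (h : ℝ → ℝ) (hmeas : Measurable h) (h1 : ∀ s ∈ Set.Ici (1:ℝ), 1 ≤ h s)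
    (hint : IntegrableOn (fun s => 1 / h s) (Set.Ici (1:ℝ))) :
    ∀ n : ℕ, 1 ≤ n →
      ¬ IntegrableOn (fun s => h s ^ n / s ^ (n + 1)) (Set.Ici (1:ℝ)) :=
  stmt2_general h h1 hint
end

section
/- For z, x, y ∈ ℂⁿ with z ≠ x and z ≠ y, one has for each coordinate i the inequality |(z_i − y_i)/|z−y|² − (z_i − x_i)/|z−x|²| ≤ (2|x−y|/(|z−x|·|z−y|))·(1 + |x−y|/|z−y|). -/
/-!
The vector whose `i`-th coordinate is estimated is the difference of the images of `z - y` and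
`z - x` under inversion in the unit sphere, so its norm is exactly `‖x - y‖ / (‖z - x‖ * ‖z - y‖)`.
A coordinate is bounded by the Euclidean norm, and this is already below the stated bound.
-/

theorem norm_inv_norm_sq_smul_sub_inv_norm_sq_smul {𝕜 E : Type*} [RCLike 𝕜] [NormedAddCommGroup E]
    [InnerProductSpace 𝕜 E] {u v : E} (hu : u ≠ 0) (hv : v ≠ 0) :
    ‖((‖u‖ ^ 2 : ℝ) : 𝕜)⁻¹ • u - ((‖v‖ ^ 2 : ℝ) : 𝕜)⁻¹ • v‖ = ‖u - v‖ / (‖u‖ * ‖v‖) := by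
  let := InnerProductSpace.rclikeToReal 𝕜 E
  have h := dist_div_norm_sq_smul hu hv 1
  rw [dist_eq_norm, dist_eq_norm, one_pow, one_div_mul_eq_div] at h
  simpa only [one_div, inv_pow, RCLike.real_smul_eq_coe_smul (K := 𝕜), RCLike.ofReal_inv,
    RCLike.ofReal_pow] using h

theorem stmt12 (n : ℕ) (z x y : EuclideanSpace ℂ (Fin n)) (hzx : z ≠ x) (hzy : z ≠ y) :
    ∀ i : Fin n,
      ‖(z i - y i) / ((‖z - y‖ ^ 2 : ℝ) : ℂ) - (z i - x i) / ((‖z - x‖ ^ 2 : ℝ) : ℂ)‖ ≤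
        2 * ‖x - y‖ / (‖z - x‖ * ‖z - y‖) * (1 + ‖x - y‖ / ‖z - y‖) := by
  intro i
  have hc : 0 ≤ ‖x - y‖ / (‖z - x‖ * ‖z - y‖) := by positivity
  have hd : 0 ≤ ‖x - y‖ / ‖z - y‖ := by positivity
  calc _ = ‖(((‖z - y‖ ^ 2 : ℝ) : ℂ)⁻¹ • (z - y) - ((‖z - x‖ ^ 2 : ℝ) : ℂ)⁻¹ • (z - x)) i‖ := by
        simp [div_eq_inv_mul]
    _ ≤ ‖((‖z - y‖ ^ 2 : ℝ) : ℂ)⁻¹ • (z - y) - ((‖z - x‖ ^ 2 : ℝ) : ℂ)⁻¹ • (z - x)‖ :=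
        PiLp.norm_apply_le _ i
    _ = ‖x - y‖ / (‖z - x‖ * ‖z - y‖) := by
        rw [← sub_sub_sub_cancel_left y x z, mul_comm]
        exact norm_inv_norm_sq_smul_sub_inv_norm_sq_smul (sub_ne_zero.2 hzy) (sub_ne_zero.2 hzx)
    _ ≤ _ := by rw [mul_div_assoc]; nlinarith
end
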